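/- arXiv:1701.04080 — 2 statements merged into one kernel-verified Lean document; each statement's English description precedes it below -/
import Mathlib

section
/- Let N : (0,1) → ℝ be differentiable, K ≥ 1, C₀ > 0, and let f : (0,1) → (0,∞) be continuous with ∫₀¹ f(t)/t dt < ∞. If N'(r) ≥ −C₀( (f(r)/r) N(r) + K r + K f(r)/r ) for all r ∈ (0,1), then there exists a constant C̄ (depending only on C₀) such that the function r ↦ e^{C̄ ∫₀^r f(t)/t dt} ( N(r) + C̄ K ( r² + ∫₀^r f(t)/t dt ) ) is monotone nondecreasing on (0,1). -/
/-!
With `F r = ∫₀ʳ f(t)/t dt`, the integrating factor `e^{C₀ F}` absorbs the term `(f/r) N` of the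
differential inequality, and the correction `C₀ K (r² + F)` absorbs the forcing terms `K r` and
`K f/r`. The derivative of the resulting function is then `e^{C₀ F}` times
`N' + C₀ (f/r) N + C₀ K (2r + f/r) + C₀² K (f/r)(r² + F) ≥ C₀ K r + C₀² K (f/r)(r² + F) ≥ 0`,
so one may take `C̄ = C₀`.
-/

open MeasureTheory Set

theorem hasDerivAt_setIntegral_Ioo_left {g : ℝ → ℝ} {a b r : ℝ}
    (hg : IntegrableOn g (Ioo a b)) (hgc : ContinuousOn g (Ioo a b)) (hr : r ∈ Ioo a b) :
    HasDerivAt (fun x => ∫ t in Ioo a x, g t) (g r) r := by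
  have hint : IntervalIntegrable g volume a r := by
    rw [intervalIntegrable_iff_integrableOn_Ioc_of_le hr.1.le]
    exact hg.mono_set fun t ht => ⟨ht.1, ht.2.trans_lt hr.2⟩
  have hnhds : Ioo a b ∈ nhds r := isOpen_Ioo.mem_nhds hr
  have hmeas : StronglyMeasurableAtFilter g (nhds r) volume :=
    ⟨Ioo a b, hnhds, hgc.aestronglyMeasurable measurableSet_Ioo⟩
  refine (intervalIntegral.integral_hasDerivAt_right hint hmeas
    (hgc.continuousAt hnhds)).congr_of_eventuallyEq ?_
  filter_upwards [hnhds] with x hx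
  rw [intervalIntegral.integral_of_le hx.1.le, integral_Ioc_eq_integral_Ioo]

theorem hasDerivAt_exp_mul_mul_add {N F : ℝ → ℝ} {N' g C K r : ℝ}
    (hN : HasDerivAt N N' r) (hF : HasDerivAt F g r) :
    HasDerivAt (fun x => Real.exp (C * F x) * (N x + C * K * (x ^ 2 + F x)))
      (Real.exp (C * F r) *
        (N' + C * g * N r + C * K * (2 * r + g) + C ^ 2 * K * g * (r ^ 2 + F r))) r := by
  have hexp := (hF.const_mul C).exp
  have hsq : HasDerivAt (fun x : ℝ => x ^ 2) (2 * r) r := by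
    simpa using hasDerivAt_pow 2 r
  have hcorr : HasDerivAt (fun x => N x + C * K * (x ^ 2 + F x)) (N' + C * K * (2 * r + g)) r :=
    hN.add ((hsq.add hF).const_mul (C * K))
  refine (hexp.mul hcorr).congr_deriv ?_
  ring

theorem monotoneOn_exp_mul_mul_add {N N' F g : ℝ → ℝ} {C K a b : ℝ}
    (hC : 0 ≤ C) (hK : 0 ≤ K) (ha : 0 ≤ a)
    (hN : ∀ r ∈ Ioo a b, HasDerivAt N (N' r) r) (hF : ∀ r ∈ Ioo a b, HasDerivAt F (g r) r)
    (hg : ∀ r ∈ Ioo a b, 0 ≤ g r) (hF₀ : ∀ r ∈ Ioo a b, 0 ≤ F r)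
    (hN' : ∀ r ∈ Ioo a b, -C * (g r * N r + K * r + K * g r) ≤ N' r) :
    MonotoneOn (fun r => Real.exp (C * F r) * (N r + C * K * (r ^ 2 + F r))) (Ioo a b) := by
  have hderiv := fun r hr => hasDerivAt_exp_mul_mul_add (C := C) (K := K) (hN r hr) (hF r hr)
  refine monotoneOn_of_hasDerivWithinAt_nonneg (convex_Ioo a b)
    (f' := fun r => Real.exp (C * F r) *
      (N' r + C * g r * N r + C * K * (2 * r + g r) + C ^ 2 * K * g r * (r ^ 2 + F r)))
    (fun r hr => (hderiv r hr).continuousAt.continuousWithinAt) ?_ ?_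
  · rw [interior_Ioo]
    exact fun r hr => (hderiv r hr).hasDerivWithinAt
  · rw [interior_Ioo]
    intro r hr
    have hforcing : 0 ≤ C ^ 2 * K * g r * (r ^ 2 + F r) :=
      mul_nonneg (mul_nonneg (by positivity) (hg r hr)) (add_nonneg (sq_nonneg r) (hF₀ r hr))
    have hCKr : 0 ≤ C * K * r := mul_nonneg (mul_nonneg hC hK) (ha.trans hr.1.le)
    exact mul_nonneg (Real.exp_pos _).le (by linarith [hN' r hr])

theorem frequency_monotonicity_lemma (C₀ : ℝ) (hC₀ : 0 < C₀) :
    ∃ Cbar : ℝ, 0 < Cbar ∧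
      ∀ (K : ℝ), 1 ≤ K →
      ∀ (N f : ℝ → ℝ),
        (∀ r ∈ Set.Ioo (0:ℝ) 1, DifferentiableAt ℝ N r) →
        ContinuousOn f (Set.Ioo 0 1) →
        (∀ t ∈ Set.Ioo (0:ℝ) 1, 0 < f t) →
        IntegrableOn (fun t => f t / t) (Set.Ioo 0 1) →
        (∀ r ∈ Set.Ioo (0:ℝ) 1,
          deriv N r ≥ -C₀ * ((f r / r) * N r + K * r + K * (f r / r))) →
        MonotoneOn (fun r =>
          Real.exp (Cbar * ∫ t in Set.Ioo 0 r, f t / t) *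
            (N r + Cbar * K * (r^2 + ∫ t in Set.Ioo 0 r, f t / t)))
          (Set.Ioo 0 1) := by
  refine ⟨C₀, hC₀, fun K hK N f hN hf hfpos hfint hineq => ?_⟩
  have hg : ∀ t ∈ Ioo (0:ℝ) 1, 0 ≤ f t / t := fun t ht => div_nonneg (hfpos t ht).le ht.1.le
  refine monotoneOn_exp_mul_mul_add hC₀.le (by linarith) le_rfl
    (fun r hr => (hN r hr).hasDerivAt)
    (fun r hr => hasDerivAt_setIntegral_Ioo_left hfint
      (hf.div continuousOn_id fun t ht => ht.1.ne') hr)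
    hg (fun r hr => setIntegral_nonneg measurableSet_Ioo
      fun t ht => hg t ⟨ht.1, ht.2.trans hr.2⟩)
    hineq
end

section
/- Let K ≥ 1, C̄ > 0, K₀ > 0, and N : (0,1) → ℝ with N(r) ≥ −C̄ K r² for all r. If the function r ↦ e^{C̄ ∫₀^r f(t)/t dt}( N(r) + C̄ K ( r² + ∫₀^r f(t)/t dt ) ) is nondecreasing on (0,1), where f : (0,1) → (0,∞) is continuous with ∫₀¹ f(t)/t dt ≤ K₀, then there exist constants C₁, C₂ > 0 depending only on C̄ and K₀ such that N(r) ≤ C₁ ( N(s) + C₂ K ) for all 0 < r < s < 1. -/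
open MeasureTheory

theorem frequency_boundedness_lemma (Cbar K₀ : ℝ) (hCbar : 0 < Cbar) (hK₀ : 0 < K₀) :
    ∃ C₁ C₂ : ℝ, 0 < C₁ ∧ 0 < C₂ ∧
      ∀ (K : ℝ), 1 ≤ K →
      ∀ (N f : ℝ → ℝ),
        (∀ r ∈ Set.Ioo (0:ℝ) 1, N r ≥ -Cbar * K * r^2) →
        ContinuousOn f (Set.Ioo 0 1) →
        (∀ t ∈ Set.Ioo (0:ℝ) 1, 0 < f t) →
        IntegrableOn (fun t => f t / t) (Set.Ioo 0 1) →
        (∫ t in Set.Ioo (0:ℝ) 1, f t / t) ≤ K₀ →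
        MonotoneOn (fun r =>
          Real.exp (Cbar * ∫ t in Set.Ioo 0 r, f t / t) *
            (N r + Cbar * K * (r^2 + ∫ t in Set.Ioo 0 r, f t / t)))
          (Set.Ioo 0 1) →
        ∀ r s : ℝ, 0 < r → r < s → s < 1 → N r ≤ C₁ * (N s + C₂ * K) := by
  refine ⟨Real.exp (Cbar * K₀), Cbar * (1 + K₀), Real.exp_pos _,
    by positivity, ?_⟩
  intro K hK N f hLB hfc hfpos hfint hfK₀ hmono r s hr hrs hs1
  have hKpos : (0:ℝ) < K := lt_of_lt_of_le one_pos hK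
  set G : ℝ → ℝ := fun r => ∫ t in Set.Ioo (0:ℝ) r, f t / t with hG
  have hr1 : r < 1 := hrs.trans hs1
  have hrmem : r ∈ Set.Ioo (0:ℝ) 1 := ⟨hr, hr1⟩
  have hsmem : s ∈ Set.Ioo (0:ℝ) 1 := ⟨hr.trans hrs, hs1⟩
  -- nonnegativity of G on (0,1)
  have hGnn : ∀ x ∈ Set.Ioo (0:ℝ) 1, 0 ≤ G x := by
    intro x hx
    apply setIntegral_nonneg measurableSet_Ioo
    intro t ht
    have htx : t ∈ Set.Ioo (0:ℝ) 1 := ⟨ht.1, ht.2.trans hx.2⟩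
    exact div_nonneg (hfpos t htx).le ht.1.le
  -- G s ≤ K₀
  have hGs : G s ≤ K₀ := by
    refine le_trans ?_ hfK₀
    apply setIntegral_mono_set hfint
    · filter_upwards [ae_restrict_mem measurableSet_Ioo] with t ht
      exact div_nonneg (hfpos t ht).le ht.1.le
    · exact HasSubset.Subset.eventuallyLE (Set.Ioo_subset_Ioo le_rfl hs1.le)
  -- A r ≥ 0 where A x = N x + Cbar*K*(x^2 + G x)
  have hAnn : ∀ x ∈ Set.Ioo (0:ℝ) 1, 0 ≤ N x + Cbar * K * (x^2 + G x) := by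
    intro x hx
    have h1 := hLB x hx
    have h2 := hGnn x hx
    nlinarith [mul_pos hCbar hKpos]
  have hmono' := hmono hrmem hsmem hrs.le
  simp only at hmono'
  have hAr := hAnn r hrmem
  have hAs := hAnn s hsmem
  have hGr := hGnn r hrmem
  have hexpr : (1:ℝ) ≤ Real.exp (Cbar * G r) :=
    Real.one_le_exp (by positivity)
  have hexps : Real.exp (Cbar * G s) ≤ Real.exp (Cbar * K₀) :=
    Real.exp_le_exp.mpr (by nlinarith)
  -- chain of inequalities
  have h1 : N r + Cbar * K * (r^2 + G r) ≤
      Real.exp (Cbar * G r) * (N r + Cbar * K * (r^2 + G r)) :=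
    le_mul_of_one_le_left hAr hexpr
  have h2 : Real.exp (Cbar * G s) * (N s + Cbar * K * (s^2 + G s)) ≤
      Real.exp (Cbar * K₀) * (N s + Cbar * K * (s^2 + G s)) :=
    mul_le_mul_of_nonneg_right hexps hAs
  have hsG : s^2 + G s ≤ 1 + K₀ := by nlinarith [hsmem.1, hsmem.2, hGs]
  have h3 : N s + Cbar * K * (s^2 + G s) ≤ N s + Cbar * (1 + K₀) * K := by
    nlinarith [mul_le_mul_of_nonneg_left hsG (mul_pos hCbar hKpos).le]
  have h4 : Real.exp (Cbar * K₀) * (N s + Cbar * K * (s^2 + G s)) ≤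
      Real.exp (Cbar * K₀) * (N s + Cbar * (1 + K₀) * K) :=
    mul_le_mul_of_nonneg_left h3 (Real.exp_pos _).le
  have hNr : N r ≤ N r + Cbar * K * (r^2 + G r) := by nlinarith [mul_pos hCbar hKpos]
  linarith
end
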